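/- arXiv:2110.07091 — 2 statements merged into one kernel-verified Lean document; each statement's English description precedes it below -/
import Mathlib

section
/- There is a constant C = C(d) > 0 such that for every u ∈ L^2(𝕋^d; ℝ^d) and all multi-indices n, m with ⌊n⌋, ⌊m⌋ ≥ 1, one has ‖(𝒯_n − 𝒯_m)(Δ^{-1}div u)‖_{L^2(𝕋^d)} ≤ C (⌊m⌋ ∧ ⌊n⌋)^{-1} ‖u‖_{L^2(𝕋^d)}. -/
open MeasureTheory Filter

noncomputable section

/-- The fundamental domain `(0,1]^d` of the torus `𝕋^d = [0,1]^d`. -/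
def box (d : ℕ) : Set (Fin d → ℝ) := Set.univ.pi fun _ => Set.Ioc (0 : ℝ) 1

/-- The character `e^{2πi k·x}` on the torus. -/
def fchar {d : ℕ} (k : Fin d → ℤ) (x : Fin d → ℝ) : ℂ :=
  Complex.exp (2 * (Real.pi : ℂ) * Complex.I * ∑ i, (k i : ℂ) * (x i : ℂ))

/-- The Fourier coefficient `f̂(k) = ∫_{𝕋^d} f(x) e^{-2πi k·x} dx`. -/
def fourierCoef {d : ℕ} {E : Type*} [NormedAddCommGroup E] [NormedSpace ℂ E]
    (f : (Fin d → ℝ) → E) (k : Fin d → ℤ) : E :=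
  ∫ x in box d, fchar (-k) x • f x

/-- The rectangular frequency set `{k : |k_i| ≤ n_i}`. -/
def rect {d : ℕ} (n : Fin d → ℕ) : Finset (Fin d → ℤ) :=
  Fintype.piFinset fun i => Finset.Icc (-(n i : ℤ)) (n i)

/-- The rectangular partial sum `𝒯_n f`. -/
def rectSum {d : ℕ} {E : Type*} [NormedAddCommGroup E] [NormedSpace ℂ E]
    (n : Fin d → ℕ) (f : (Fin d → ℝ) → E) (x : Fin d → ℝ) : E :=
  ∑ k ∈ rect n, fchar k x • fourierCoef f k

/-- `⌊n⌋ = min (n_1, …, n_d)`. -/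
def nmin {d : ℕ} (n : Fin d → ℕ) : ℕ := sInf (Set.range n)

/-- The `L^q` norm on the torus (computed over the fundamental domain). -/
def lqNorm {d : ℕ} {E : Type*} [NormedAddCommGroup E] (q : ℝ)
    (f : (Fin d → ℝ) → E) : ℝ :=
  (∫ x in box d, ‖f x‖ ^ q) ^ (1 / q)

/-- `ℤ^d`-periodicity of a function on `ℝ^d`. -/
def ZPeriodic {d : ℕ} (φ : (Fin d → ℝ) → ℂ) : Prop :=
  ∀ (x : Fin d → ℝ) (k : Fin d → ℤ), φ (x + fun i => (k i : ℝ)) = φ x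

/-- `g` is the weak gradient of `f` on the torus: integration by parts against
smooth `ℤ^d`-periodic test functions. -/
def HasWeakGradient {d : ℕ} (f : (Fin d → ℝ) → ℂ) (g : (Fin d → ℝ) → Fin d → ℂ) : Prop :=
  ∀ φ : (Fin d → ℝ) → ℂ, ContDiff ℝ (⊤ : ℕ∞) φ → ZPeriodic φ → ∀ i : Fin d,
    (∫ x in box d, f x * fderiv ℝ φ x (Pi.single i 1)) =
      - ∫ x in box d, g x i * φ x

/-- `|k|²` for a frequency `k ∈ ℤ^d`. -/
def normSqK {d : ℕ} (k : Fin d → ℤ) : ℝ := ∑ i, ((k i : ℝ)) ^ 2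

/-- `Δ^{-1} div u = Σ_{k ≠ 0} (−1/(4π²|k|²)) (Σ_l 2πi k_l û_l(k)) e^{2πi k·x}`. -/
def invLapDiv {d : ℕ} (u : (Fin d → ℝ) → Fin d → ℂ) (x : Fin d → ℝ) : ℂ :=
  ∑' k : Fin d → ℤ, if k = 0 then 0 else
    (-1 / (4 * (Real.pi : ℂ) ^ 2 * (normSqK k : ℂ))) *
      (∑ l, 2 * (Real.pi : ℂ) * Complex.I * (k l : ℂ) *
        fourierCoef (fun y => u y l) k) * fchar k x
lemma measurableSet_box (d : ℕ) : MeasurableSet (box d) :=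
  MeasurableSet.univ_pi fun _ => measurableSet_Ioc

lemma volume_box (d : ℕ) : volume (box d) = 1 := by
  rw [box, volume_pi_pi]
  simp [Real.volume_Ioc]

lemma fchar_eq_prod {d : ℕ} (k : Fin d → ℤ) (x : Fin d → ℝ) :
    fchar k x = ∏ i, Complex.exp (2 * (Real.pi : ℂ) * Complex.I * ((k i : ℂ) * (x i : ℂ))) := by
  rw [fchar, ← Complex.exp_sum, Finset.mul_sum]

lemma norm_fchar {d : ℕ} (k : Fin d → ℤ) (x : Fin d → ℝ) : ‖fchar k x‖ = 1 := by
  rw [fchar, Complex.norm_exp]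
  have : (2 * (Real.pi : ℂ) * Complex.I * ∑ i, (k i : ℂ) * (x i : ℂ)).re = 0 := by
    have : ∑ i, (k i : ℂ) * (x i : ℂ) = ((∑ i, (k i : ℝ) * x i : ℝ) : ℂ) := by push_cast; ring_nf
    rw [this]
    simp [Complex.mul_re, Complex.mul_im]
  rw [this, Real.exp_zero]

lemma fchar_mul {d : ℕ} (k j : Fin d → ℤ) (x : Fin d → ℝ) :
    fchar k x * fchar j x = fchar (k + j) x := by
  rw [fchar, fchar, fchar, ← Complex.exp_add, ← mul_add, ← Finset.sum_add_distrib]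
  congr 2
  refine Finset.sum_congr rfl fun i _ => ?_
  push_cast [Pi.add_apply]
  ring

lemma continuous_fchar {d : ℕ} (k : Fin d → ℤ) : Continuous (fchar k) := by
  unfold fchar
  fun_prop

lemma integral_exp_Ioc (n : ℤ) :
    (∫ t in Set.Ioc (0:ℝ) 1, Complex.exp (2 * (Real.pi : ℂ) * Complex.I * ((n : ℂ) * (t : ℂ)))) =
      if n = 0 then 1 else 0 := by
  rw [← intervalIntegral.integral_of_le zero_le_one]
  by_cases hn : n = 0
  · simp [hn]
  · have hc : 2 * (Real.pi : ℂ) * Complex.I * (n : ℂ) ≠ 0 := by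
      simp [Real.pi_ne_zero, Complex.I_ne_zero, hn, Complex.ofReal_ne_zero]
    have : ∀ t : ℝ, 2 * (Real.pi : ℂ) * Complex.I * ((n : ℂ) * (t : ℂ)) =
        (2 * (Real.pi : ℂ) * Complex.I * (n : ℂ)) * (t : ℂ) := fun t => by ring
    simp_rw [this]
    rw [integral_exp_mul_complex hc]
    have h1 : Complex.exp (2 * (Real.pi : ℂ) * Complex.I * (n : ℂ) * ((1:ℝ) : ℂ)) = 1 := by
      rw [Complex.ofReal_one, mul_one]
      have : 2 * (Real.pi : ℂ) * Complex.I * (n : ℂ) = (n : ℤ) * (2 * (Real.pi : ℂ) * Complex.I) := by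
        push_cast; ring
      rw [this, Complex.exp_int_mul_two_pi_mul_I]
    have h0 : Complex.exp (2 * (Real.pi : ℂ) * Complex.I * (n : ℂ) * ((0:ℝ) : ℂ)) = 1 := by
      simp
    rw [h1, h0, sub_self, zero_div, if_neg hn]

lemma integral_fchar {d : ℕ} (k : Fin d → ℤ) :
    (∫ x in box d, fchar k x) = if k = 0 then 1 else 0 := by
  have hind : ∀ x : Fin d → ℝ, (box d).indicator (fchar k) x =
      ∏ i, (Set.Ioc (0:ℝ) 1).indicator
        (fun t => Complex.exp (2 * (Real.pi : ℂ) * Complex.I * ((k i : ℂ) * (t : ℂ)))) (x i) := by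
    intro x
    by_cases hx : x ∈ box d
    · rw [Set.indicator_of_mem hx, fchar_eq_prod]
      refine Finset.prod_congr rfl fun i _ => ?_
      rw [Set.indicator_of_mem (hx i (Set.mem_univ i))]
    · rw [Set.indicator_of_notMem hx]
      rw [box, Set.mem_univ_pi] at hx
      push_neg at hx
      obtain ⟨i, hi⟩ := hx
      refine (Finset.prod_eq_zero (Finset.mem_univ i) ?_).symm
      rw [Set.indicator_of_notMem hi]
  rw [← integral_indicator (measurableSet_box d)]
  simp_rw [hind]
  rw [volume_pi, MeasureTheory.integral_fintype_prod_eq_prod (μ := fun _ => volume)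
    (f := fun i t => (Set.Ioc (0:ℝ) 1).indicator
      (fun t => Complex.exp (2 * (Real.pi : ℂ) * Complex.I * ((k i : ℂ) * (t : ℂ)))) t)]
  have : ∀ i : Fin d, (∫ t : ℝ, (Set.Ioc (0:ℝ) 1).indicator
      (fun t => Complex.exp (2 * (Real.pi : ℂ) * Complex.I * ((k i : ℂ) * (t : ℂ)))) t) =
      if k i = 0 then 1 else 0 := by
    intro i
    rw [integral_indicator measurableSet_Ioc, integral_exp_Ioc]
  simp_rw [this]
  by_cases hk : k = 0
  · simp [hk]
  · rw [if_neg hk]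
    obtain ⟨i, hi⟩ : ∃ i, k i ≠ 0 := by
      by_contra h
      push_neg at h
      exact hk (funext h)
    exact Finset.prod_eq_zero (Finset.mem_univ i) (by rw [if_neg hi])

abbrev μb (d : ℕ) : Measure (Fin d → ℝ) := volume.restrict (box d)

instance (d : ℕ) : IsProbabilityMeasure (μb d) :=
  ⟨by rw [Measure.restrict_apply_univ, volume_box]⟩

lemma conj_fchar {d : ℕ} (k : Fin d → ℤ) (x : Fin d → ℝ) :
    (starRingEnd ℂ) (fchar k x) = fchar (-k) x := by
  rw [fchar, fchar, ← Complex.exp_conj]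
  congr 1
  rw [map_mul, map_sum]
  simp only [map_mul, Complex.conj_I, map_ofNat, Complex.conj_ofReal]
  rw [Finset.mul_sum, Finset.mul_sum]
  refine Finset.sum_congr rfl fun i _ => ?_
  simp only [Pi.neg_apply]
  rw [map_intCast]
  push_cast
  ring

lemma memℒp_fchar {d : ℕ} (k : Fin d → ℤ) : MemLp (fchar k) 2 (μb d) := by
  refine MemLp.of_bound ((continuous_fchar k).aestronglyMeasurable) 1 ?_
  filter_upwards with x
  rw [norm_fchar]

def V (d : ℕ) (k : Fin d → ℤ) : Lp ℂ 2 (μb d) := (memℒp_fchar k).toLp (fchar k)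

open scoped InnerProductSpace in
lemma inner_V_toLp {d : ℕ} {f : (Fin d → ℝ) → ℂ} (hf : MemLp f 2 (μb d)) (k : Fin d → ℤ) :
    ⟪V d k, hf.toLp f⟫_ℂ = fourierCoef f k := by
  rw [MeasureTheory.L2.inner_def]
  rw [fourierCoef]
  refine integral_congr_ae ?_
  filter_upwards [MemLp.coeFn_toLp (memℒp_fchar k), MemLp.coeFn_toLp hf] with x hx hfx
  rw [RCLike.inner_apply, show ((V d k : Lp ℂ 2 (μb d)) : (Fin d → ℝ) → ℂ) x = (MemLp.toLp (fchar k) (memℒp_fchar k) : Lp ℂ 2 (μb d)) x from rfl, hx, hfx, conj_fchar, smul_eq_mul, mul_comm]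

open scoped InnerProductSpace in
lemma orthonormal_V (d : ℕ) : Orthonormal ℂ (V d) := by
  rw [orthonormal_iff_ite]
  intro k j
  have : ⟪V d k, V d j⟫_ℂ = fourierCoef (fchar j) k := inner_V_toLp (memℒp_fchar j) k
  rw [this, fourierCoef]
  have : ∀ x : Fin d → ℝ, fchar (-k) x • fchar j x = fchar (-k + j) x := fun x => by
    rw [smul_eq_mul, fchar_mul]
  simp_rw [this]
  rw [integral_fchar]
  congr 1
  simp [neg_add_eq_zero, eq_comm]

lemma lqNorm_nonneg {d : ℕ} {E : Type*} [NormedAddCommGroup E] (q : ℝ)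
    (f : (Fin d → ℝ) → E) : 0 ≤ lqNorm q f := by
  apply Real.rpow_nonneg
  exact integral_nonneg fun x => Real.rpow_nonneg (norm_nonneg _) q

lemma lqNorm_eq_norm_toLp {d : ℕ} {E : Type*} [NormedAddCommGroup E] [NormedSpace ℝ E]
    {f : (Fin d → ℝ) → E} (hf : MemLp f 2 (μb d)) :
    lqNorm 2 f = ‖hf.toLp f‖ := by
  rw [MeasureTheory.Lp.norm_toLp f hf, MemLp.eLpNorm_eq_integral_rpow_norm two_ne_zero ENNReal.ofNat_ne_top hf,
    ENNReal.toReal_ofReal (Real.rpow_nonneg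
      (integral_nonneg fun x => Real.rpow_nonneg (norm_nonneg _) _) _), lqNorm]
  norm_num

open scoped InnerProductSpace in
lemma bessel {d : ℕ} {f : (Fin d → ℝ) → ℂ} (hf : MemLp f 2 (μb d)) (S : Finset (Fin d → ℤ)) :
    ∑ k ∈ S, ‖fourierCoef f k‖ ^ 2 ≤ (lqNorm 2 f) ^ 2 := by
  have h := (orthonormal_V d).sum_inner_products_le (s := S) (hf.toLp f)
  simp_rw [inner_V_toLp hf] at h
  rwa [lqNorm_eq_norm_toLp hf]

lemma memℒp_trig_sum {d : ℕ} (S : Finset (Fin d → ℤ)) (a : (Fin d → ℤ) → ℂ) :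
    MemLp (fun x => ∑ k ∈ S, a k * fchar k x) 2 (μb d) :=
  memLp_finset_sum S fun k _ => (memℒp_fchar k).const_mul (a k)

lemma toLp_trig_sum {d : ℕ} (S : Finset (Fin d → ℤ)) (a : (Fin d → ℤ) → ℂ) :
    (memℒp_trig_sum S a).toLp _ = ∑ k ∈ S, a k • V d k := by
  classical
  induction S using Finset.induction with
  | empty =>
    rw [Finset.sum_empty]
    have : (fun x : Fin d → ℝ => ∑ k ∈ (∅ : Finset (Fin d → ℤ)), a k * fchar k x) = 0 := by
      funext x; simp
    simp_rw [this]
    exact MemLp.toLp_zero _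
  | @insert k S' hk ih =>
    have h1 : MemLp (a k • fchar k) 2 (μb d) := (memℒp_fchar k).const_smul (a k)
    have h2 := memℒp_trig_sum S' a
    have heq : (memℒp_trig_sum (insert k S') a).toLp _ =
        (h1.add h2).toLp (a k • fchar k + fun x => ∑ j ∈ S', a j * fchar j x) := by
      refine MemLp.toLp_congr _ _ ?_
      filter_upwards with x
      simp [Finset.sum_insert hk, smul_eq_mul]
    rw [heq, MemLp.toLp_add h1 h2, MemLp.toLp_const_smul, Finset.sum_insert hk, ih]
    rfl

open scoped InnerProductSpace in
lemma lqNorm_trig_sum_sq {d : ℕ} (S : Finset (Fin d → ℤ)) (a : (Fin d → ℤ) → ℂ) :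
    (lqNorm 2 (fun x => ∑ k ∈ S, a k * fchar k x)) ^ 2 = ∑ k ∈ S, ‖a k‖ ^ 2 := by
  rw [lqNorm_eq_norm_toLp (memℒp_trig_sum S a), toLp_trig_sum]
  rw [← @inner_self_eq_norm_sq ℂ]
  rw [(orthonormal_V d).inner_sum a a S]
  simp_rw [RCLike.conj_mul]
  norm_cast

lemma fourierCoef_tsum {d : ℕ} (c : (Fin d → ℤ) → ℂ) (hsum : Summable fun k => ‖c k‖)
    (m : Fin d → ℤ) :
    fourierCoef (fun x => ∑' k, c k * fchar k x) m = c m := by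
  have key : ∀ x : Fin d → ℝ, fchar (-m) x • (∑' k, c k * fchar k x) =
      ∑' k, fchar (-m) x * (c k * fchar k x) := fun x => by
    rw [smul_eq_mul, tsum_mul_left]
  rw [fourierCoef]
  simp_rw [key]
  rw [MeasureTheory.integral_tsum]
  · have h1 : ∀ k, (∫ x in box d, fchar (-m) x * (c k * fchar k x)) =
        if k = m then c m else 0 := by
      intro k
      have : ∀ x : Fin d → ℝ, fchar (-m) x * (c k * fchar k x) = c k * fchar (-m + k) x := by
        intro x
        rw [← fchar_mul]
        ring
      simp_rw [this]
      rw [MeasureTheory.integral_const_mul, integral_fchar]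
      by_cases hk : k = m
      · subst hk; simp
      · rw [if_neg (fun h => hk (neg_add_eq_zero.mp h).symm), if_neg hk, mul_zero]
    simp_rw [h1]
    exact tsum_ite_eq m (fun _ => c m)
  · intro k
    exact Continuous.aestronglyMeasurable (by
      have := (continuous_fchar (d := d) (-m)).mul ((continuous_const (y := c k)).mul (continuous_fchar k))
      exact this)
  · have hnorm : ∀ k, (∫⁻ x, ‖fchar (-m) x * (c k * fchar k x)‖₊ ∂(μb d)) = (‖c k‖₊ : ENNReal) := by
      intro k
      have : ∀ x : Fin d → ℝ, (‖fchar (-m) x * (c k * fchar k x)‖₊ : ENNReal) = (‖c k‖₊ : ENNReal) := by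
        intro x
        congr 1
        ext
        rw [coe_nnnorm, coe_nnnorm, norm_mul, norm_mul, norm_fchar, norm_fchar, one_mul, mul_one]
      simp_rw [this]
      rw [MeasureTheory.lintegral_const, measure_univ, mul_one]
    simp_rw [enorm_eq_nnnorm, hnorm]
    rw [← ENNReal.coe_tsum (NNReal.summable_coe.mp (by simpa [coe_nnnorm] using hsum))]
    exact ENNReal.coe_ne_top

/-- The Fourier coefficients of `Δ⁻¹ div u`. -/
def uc {d : ℕ} (u : (Fin d → ℝ) → Fin d → ℂ) (k : Fin d → ℤ) : ℂ :=
  if k = 0 then 0 else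
    (-1 / (4 * (Real.pi : ℂ) ^ 2 * (normSqK k : ℂ))) *
      (∑ l, 2 * (Real.pi : ℂ) * Complex.I * (k l : ℂ) * fourierCoef (fun y => u y l) k)

lemma invLapDiv_eq {d : ℕ} (u : (Fin d → ℝ) → Fin d → ℂ) (x : Fin d → ℝ) :
    invLapDiv u x = ∑' k, uc u k * fchar k x := by
  rw [invLapDiv]
  refine tsum_congr fun k => ?_
  rw [uc, ite_mul, zero_mul]

lemma normSqK_pos {d : ℕ} {k : Fin d → ℤ} (hk : k ≠ 0) : 0 < normSqK k := by
  obtain ⟨i, hi⟩ : ∃ i, k i ≠ 0 := by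
    by_contra h; push_neg at h; exact hk (funext h)
  refine Finset.sum_pos' (fun j _ => sq_nonneg _) ⟨i, Finset.mem_univ i, ?_⟩
  have : (k i : ℝ) ≠ 0 := Int.cast_ne_zero.mpr hi
  positivity

set_option maxHeartbeats 2000000 in
lemma uc_sq_bound {d : ℕ} (u : (Fin d → ℝ) → Fin d → ℂ) {k : Fin d → ℤ} (hk : k ≠ 0) :
    ‖uc u k‖ ^ 2 ≤ (∑ l, ‖fourierCoef (fun y => u y l) k‖ ^ 2) / normSqK k := by
  set q := normSqK k with hqdef
  have hq : 0 < q := normSqK_pos hk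
  set s := ∑ l, ‖fourierCoef (fun y => u y l) k‖ ^ 2 with hsdef
  have hs : 0 ≤ s := Finset.sum_nonneg fun l _ => sq_nonneg _
  have hnorm1 : ‖(-1 / (4 * (Real.pi : ℂ) ^ 2 * (q : ℂ)))‖ = 1 / (4 * Real.pi ^ 2 * q) := by
    rw [norm_div, norm_neg, norm_one]
    congr 1
    rw [norm_mul, norm_mul]
    simp [abs_of_pos hq, abs_of_pos Real.pi_pos, sq_abs]
  have hterm : ∀ l : Fin d, ‖2 * (Real.pi : ℂ) * Complex.I * (k l : ℂ) *
      fourierCoef (fun y => u y l) k‖ =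
      2 * Real.pi * (|((k l : ℝ))| * ‖fourierCoef (fun y => u y l) k‖) := by
    intro l
    rw [norm_mul, norm_mul, norm_mul]
    simp [Complex.norm_I, abs_of_pos Real.pi_pos, Complex.norm_intCast]
    ring
  have hsum_le : ‖∑ l, 2 * (Real.pi : ℂ) * Complex.I * (k l : ℂ) *
      fourierCoef (fun y => u y l) k‖ ≤
      2 * Real.pi * ∑ l, |((k l : ℝ))| * ‖fourierCoef (fun y => u y l) k‖ := by
    refine (norm_sum_le _ _).trans ?_
    rw [Finset.mul_sum]
    exact Finset.sum_le_sum fun l _ => le_of_eq (hterm l)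
  have hCS : (∑ l, |((k l : ℝ))| * ‖fourierCoef (fun y => u y l) k‖) ^ 2 ≤ q * s := by
    have h := Finset.sum_mul_sq_le_sq_mul_sq Finset.univ (fun l => |((k l : ℝ))|)
      (fun l => ‖fourierCoef (fun y => u y l) k‖)
    have hq2 : (∑ l, |((k l : ℝ))| ^ 2) = q := by
      rw [hqdef, normSqK]
      exact Finset.sum_congr rfl fun l _ => sq_abs _
    rw [hq2] at h
    exact h
  have h0 : ‖uc u k‖ = ‖(-1 / (4 * (Real.pi : ℂ) ^ 2 * (q : ℂ)))‖ *
      ‖∑ l, 2 * (Real.pi : ℂ) * Complex.I * (k l : ℂ) * fourierCoef (fun y => u y l) k‖ := by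
    rw [uc, if_neg hk, norm_mul]
  rw [h0, hnorm1, mul_pow]
  have hA : ‖∑ l, 2 * (Real.pi : ℂ) * Complex.I * (k l : ℂ) *
      fourierCoef (fun y => u y l) k‖ ^ 2 ≤ (2 * Real.pi) ^ 2 * (q * s) := by
    calc _ ≤ (2 * Real.pi * ∑ l, |((k l : ℝ))| * ‖fourierCoef (fun y => u y l) k‖) ^ 2 := by
            gcongr

         _ = (2 * Real.pi) ^ 2 * (∑ l, |((k l : ℝ))| * ‖fourierCoef (fun y => u y l) k‖) ^ 2 := by
            ring
         _ ≤ (2 * Real.pi) ^ 2 * (q * s) := by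
            gcongr
  calc (1 / (4 * Real.pi ^ 2 * q)) ^ 2 * ‖∑ l, 2 * (Real.pi : ℂ) * Complex.I * (k l : ℂ) *
        fourierCoef (fun y => u y l) k‖ ^ 2
      ≤ (1 / (4 * Real.pi ^ 2 * q)) ^ 2 * ((2 * Real.pi) ^ 2 * (q * s)) := by
        gcongr

    _ = s / (4 * Real.pi ^ 2 * q) := by
        field_simp
        ring
    _ ≤ s / q := by
        have hpi : 9 ≤ Real.pi ^ 2 := by nlinarith [Real.pi_gt_three]
        have hle : q ≤ 4 * Real.pi ^ 2 * q := by nlinarith [hpi, hq]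
        exact div_le_div_of_nonneg_left hs hq hle

lemma sq_lqNorm {d : ℕ} {E : Type*} [NormedAddCommGroup E] (f : (Fin d → ℝ) → E) :
    lqNorm 2 f ^ 2 = ∫ x in box d, ‖f x‖ ^ (2:ℝ) := by
  have hI : 0 ≤ ∫ x in box d, ‖f x‖ ^ (2:ℝ) :=
    integral_nonneg fun x => Real.rpow_nonneg (norm_nonneg _) _
  rw [lqNorm, one_div, show ((2:ℝ))⁻¹ = (((2:ℕ):ℝ))⁻¹ by norm_num]
  exact Real.rpow_inv_natCast_pow hI two_ne_zero

lemma memℒp_comp {d : ℕ} {u : (Fin d → ℝ) → Fin d → ℂ} (hu : MemLp u 2 (μb d)) (l : Fin d) :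
    MemLp (fun x => u x l) 2 (μb d) := by
  refine MemLp.of_le hu ((continuous_apply l).comp_aestronglyMeasurable hu.1) ?_
  filter_upwards with x
  exact norm_le_pi_norm (u x) l

lemma sq_lqNorm_comp_le {d : ℕ} {u : (Fin d → ℝ) → Fin d → ℂ} (hu : MemLp u 2 (μb d))
    (l : Fin d) : lqNorm 2 (fun x => u x l) ^ 2 ≤ lqNorm 2 u ^ 2 := by
  rw [sq_lqNorm, sq_lqNorm]
  refine integral_mono_of_nonneg (Filter.Eventually.of_forall fun x =>
    Real.rpow_nonneg (norm_nonneg _) _) ?_ (Filter.Eventually.of_forall fun x => ?_)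
  · have h := hu.integrable_norm_rpow two_ne_zero ENNReal.ofNat_ne_top
    simpa using h
  · exact Real.rpow_le_rpow (norm_nonneg _) (norm_le_pi_norm (u x) l) (by norm_num)

lemma nmin_le {d : ℕ} (n : Fin d → ℕ) (i : Fin d) : nmin n ≤ n i := Nat.sInf_le ⟨i, rfl⟩

lemma not_mem_rect_normSq {d : ℕ} {n : Fin d → ℕ} {k : Fin d → ℤ} {N : ℝ}
    (hN0 : 0 ≤ N) (hNn : N ≤ (nmin n : ℝ)) (hk : k ∉ rect n) :
    k ≠ 0 ∧ N ^ 2 ≤ normSqK k := by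
  rw [rect, Fintype.mem_piFinset] at hk
  push_neg at hk
  obtain ⟨i, hi⟩ := hk
  rw [Finset.mem_Icc] at hi
  push_neg at hi
  have habs : (n i : ℤ) < |k i| := by
    rcases le_or_gt (-(n i : ℤ)) (k i) with h | h
    · have := hi h
      calc (n i : ℤ) < k i := this
        _ ≤ |k i| := le_abs_self _
    · calc (n i : ℤ) ≤ -(-(n i:ℤ)) := by omega
        _ < - k i := by omega
        _ ≤ |k i| := neg_le_abs _
  have hki : k i ≠ 0 := by
    intro h; rw [h] at habs; simp at habs; omega
  constructor
  · intro h; exact hki (by rw [h]; rfl)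
  · have hNr : N ≤ |((k i : ℝ))| := by
      have h1 : (nmin n : ℝ) ≤ (n i : ℝ) := by exact_mod_cast nmin_le n i
      have h2 : ((n i : ℝ)) + 1 ≤ |((k i : ℝ))| := by
        have : (n i : ℤ) + 1 ≤ |k i| := habs
        calc ((n i : ℝ)) + 1 = (((n i : ℤ) + 1 : ℤ) : ℝ) := by push_cast; ring
          _ ≤ ((|k i| : ℤ) : ℝ) := by exact_mod_cast this
          _ = |((k i : ℝ))| := by push_cast; rfl
      linarith
    have hsq : N ^ 2 ≤ ((k i : ℝ)) ^ 2 := by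
      rw [← sq_abs ((k i : ℝ))]
      exact pow_le_pow_left₀ hN0 hNr 2
    refine hsq.trans ?_
    rw [normSqK]
    exact Finset.single_le_sum (fun j _ => sq_nonneg ((k j : ℝ))) (Finset.mem_univ i)

/-- There is `C = C(d) > 0` such that for every `u ∈ L²(𝕋^d; ℝ^d)` and all multi-indices
`n, m` with `⌊n⌋, ⌊m⌋ ≥ 1`,
`‖(𝒯_n − 𝒯_m)(Δ^{-1} div u)‖_{L²} ≤ C (⌊m⌋ ∧ ⌊n⌋)⁻¹ ‖u‖_{L²}`. -/
theorem statement2 (d : ℕ) (hd : 1 ≤ d) :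
    ∃ C : ℝ, 0 < C ∧
      ∀ u : (Fin d → ℝ) → Fin d → ℂ,
        MemLp u 2 (volume.restrict (box d)) →
        ∀ n m : Fin d → ℕ, 1 ≤ nmin n → 1 ≤ nmin m →
          lqNorm 2 (fun x => rectSum n (invLapDiv u) x - rectSum m (invLapDiv u) x) ≤
            C / min (nmin m : ℝ) (nmin n : ℝ) * lqNorm 2 u := by
  classical
  have hd' : (0:ℝ) < d := by exact_mod_cast hd
  refine ⟨d, hd', ?_⟩
  intro u hu n m hn hm
  set N : ℝ := min (nmin m : ℝ) (nmin n : ℝ) with hNdef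
  have hN1 : 1 ≤ N := le_min (by exact_mod_cast hm) (by exact_mod_cast hn)
  have hN0 : 0 < N := lt_of_lt_of_le one_pos hN1
  have hRHS0 : 0 ≤ (d:ℝ) / N * lqNorm 2 u :=
    mul_nonneg (div_nonneg hd'.le hN0.le) (lqNorm_nonneg 2 u)
  by_cases hs : Summable (fun k => ‖uc u k‖)
  · -- summable case
    have hcoef : ∀ k, fourierCoef (invLapDiv u) k = uc u k := by
      intro k
      have h1 : invLapDiv u = fun x => ∑' j, uc u j * fchar j x := funext (invLapDiv_eq u)
      rw [h1, fourierCoef_tsum _ hs]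
    set T := rect n ∪ rect m with hT
    set a : (Fin d → ℤ) → ℂ := fun k =>
      (if k ∈ rect n then uc u k else 0) - (if k ∈ rect m then uc u k else 0) with ha
    have hrs : ∀ (S : Finset (Fin d → ℤ)), S ⊆ T → ∀ x,
        (∑ k ∈ T, (if k ∈ S then uc u k else 0) * fchar k x) = ∑ k ∈ S, fchar k x • uc u k := by
      intro S hS x
      simp_rw [ite_mul, zero_mul]
      rw [Finset.sum_ite_mem, Finset.inter_eq_right.mpr hS]
      exact Finset.sum_congr rfl fun k _ => by rw [smul_eq_mul, mul_comm]
    have hdiff : (fun x => rectSum n (invLapDiv u) x - rectSum m (invLapDiv u) x) =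
        fun x => ∑ k ∈ T, a k * fchar k x := by
      funext x
      rw [rectSum, rectSum]
      simp_rw [hcoef, ha, sub_mul, Finset.sum_sub_distrib]
      rw [hrs (rect n) Finset.subset_union_left x, hrs (rect m) Finset.subset_union_right x]
    rw [hdiff]
    -- squared estimate
    have hksum : ∀ k ∈ T, ‖a k‖ ^ 2 ≤
        (∑ l, ‖fourierCoef (fun y => u y l) k‖ ^ 2) / N ^ 2 := by
      intro k _
      have hsnn : 0 ≤ ∑ l, ‖fourierCoef (fun y => u y l) k‖ ^ 2 :=
        Finset.sum_nonneg fun l _ => sq_nonneg _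
      by_cases hboth : k ∈ rect n ∧ k ∈ rect m
      · have : a k = 0 := by rw [ha]; simp [hboth.1, hboth.2]
        rw [this]
        simpa using div_nonneg hsnn (sq_nonneg N)
      · have hkey : k ≠ 0 ∧ N ^ 2 ≤ normSqK k := by
          rcases not_and_or.mp hboth with h | h
          · exact not_mem_rect_normSq hN0.le (min_le_right _ _) h
          · exact not_mem_rect_normSq hN0.le (min_le_left _ _) h
        have hnorma : ‖a k‖ ≤ ‖uc u k‖ := by
          rw [ha]
          by_cases h1 : k ∈ rect n <;> by_cases h2 : k ∈ rect m <;>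
            simp [h1, h2, hboth, norm_neg] <;> tauto
        calc ‖a k‖ ^ 2 ≤ ‖uc u k‖ ^ 2 := pow_le_pow_left₀ (norm_nonneg _) hnorma 2
          _ ≤ (∑ l, ‖fourierCoef (fun y => u y l) k‖ ^ 2) / normSqK k := uc_sq_bound u hkey.1
          _ ≤ (∑ l, ‖fourierCoef (fun y => u y l) k‖ ^ 2) / N ^ 2 :=
              div_le_div_of_nonneg_left hsnn (by positivity) hkey.2
    have hmain : (lqNorm 2 fun x => ∑ k ∈ T, a k * fchar k x) ^ 2 ≤
        ((d:ℝ) / N * lqNorm 2 u) ^ 2 := by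
      rw [lqNorm_trig_sum_sq T a]
      calc ∑ k ∈ T, ‖a k‖ ^ 2
          ≤ ∑ k ∈ T, (∑ l, ‖fourierCoef (fun y => u y l) k‖ ^ 2) / N ^ 2 :=
            Finset.sum_le_sum hksum
        _ = (∑ l, ∑ k ∈ T, ‖fourierCoef (fun y => u y l) k‖ ^ 2) / N ^ 2 := by
            rw [← Finset.sum_div, Finset.sum_comm]
        _ ≤ (∑ l : Fin d, (lqNorm 2 u) ^ 2) / N ^ 2 := by
            gcongr with l _
            exact (bessel (memℒp_comp hu l) T).trans (sq_lqNorm_comp_le hu l)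
        _ = (d:ℝ) * (lqNorm 2 u) ^ 2 / N ^ 2 := by
            rw [Finset.sum_const, Finset.card_univ, Fintype.card_fin]
            ring_nf
        _ ≤ ((d:ℝ) / N * lqNorm 2 u) ^ 2 := by
            rw [mul_pow, div_pow]
            rw [div_mul_eq_mul_div]
            apply div_le_div_of_nonneg_right ?_ (by positivity)
            have hd1 : (1:ℝ) ≤ (d:ℝ) := by exact_mod_cast hd
            have : (d:ℝ) ≤ (d:ℝ)^2 := by nlinarith [hd1]
            nlinarith [sq_nonneg (lqNorm 2 u), lqNorm_nonneg 2 u, this]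
    have := pow_le_pow_iff_left₀ (lqNorm_nonneg 2 _) hRHS0 (two_ne_zero) |>.mp hmain
    exact this
  · -- non-summable case: the series vanishes identically
    have hzero : invLapDiv u = fun _ => (0:ℂ) := by
      funext x
      rw [invLapDiv_eq]
      apply tsum_eq_zero_of_not_summable
      intro hS
      apply hs
      have h1 : Summable fun k => ‖uc u k * fchar k x‖ := summable_norm_iff.mpr hS
      simp_rw [norm_mul, norm_fchar, mul_one] at h1
      exact h1
    have hcoef : ∀ k, fourierCoef (invLapDiv u) k = 0 := by
      intro k
      rw [hzero, fourierCoef]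
      simp
    have hfun : (fun x => rectSum n (invLapDiv u) x - rectSum m (invLapDiv u) x) =
        fun _ => (0:ℂ) := by
      funext x
      simp [rectSum, hcoef]
    rw [hfun]
    have : lqNorm 2 (fun _ : Fin d → ℝ => (0:ℂ)) = 0 := by
      rw [lqNorm,
        show (∫ x in box d, ‖(0:ℂ)‖ ^ (2:ℝ)) = 0 from by
          simp [Real.zero_rpow (by norm_num : (2:ℝ) ≠ 0)],
        Real.zero_rpow (by norm_num : (1/2 : ℝ) ≠ 0)]
    rw [this]
    exact hRHS0

end
end

section
/- Let n ∈ ℕ and let u, v ∈ (𝒮_n L²(𝕋³))³ be vector-valued trigonometric polynomials with ∇·u = 0, ∇·v = 0, and ∫_{𝕋³} u dx = ∫_{𝕋³} v dx = 0. Then ∫_{𝕋³} u · 𝒮_n 𝒫((v·∇)u) dx = 0. -/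
open MeasureTheory Filter

noncomputable section

/-- Vector fields on the torus `𝕋³` (with complex components). -/
abbrev V3 : Type := (Fin 3 → ℝ) → Fin 3 → ℂ

/-- `f` belongs to `𝒮_n L²(𝕋³)`, i.e. `f` is a trigonometric polynomial with
frequencies `k` satisfying `|k_1|, |k_2|, |k_3| ≤ n`. -/
def inSn (n : ℕ) (f : (Fin 3 → ℝ) → ℂ) : Prop :=
  ∃ c : (Fin 3 → ℤ) → ℂ,
    f = fun x => ∑ k ∈ rect (fun _ : Fin 3 => n), c k * fchar k x

/-- Pointwise divergence-free condition `∇·v = 0` (for smooth fields). -/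
def divFree (v : V3) : Prop :=
  ∀ x : Fin 3 → ℝ, ∑ i, fderiv ℝ (fun y => v y i) x (Pi.single i 1) = 0

/-- All components of `u` have zero mean over `𝕋³`. -/
def meanZeroV (u : V3) : Prop := ∀ j : Fin 3, (∫ x in box 3, u x j) = 0

/-- The convective term `((v·∇)u)_j = Σ_i v_i ∂_i u_j` (for smooth `u`). -/
def convect (v u : V3) (x : Fin 3 → ℝ) (j : Fin 3) : ℂ :=
  ∑ i, v x i * fderiv ℝ (fun y => u y j) x (Pi.single i 1)

/-- The Leray projector `𝒫` on mean-zero vector fields, given by the Fourier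
multiplier `((𝒫u)^)_j(k) = Σ_l (δ_{jl} − k_j k_l / |k|²) û_l(k)` for `k ≠ 0`. -/
def leray (u : V3) (x : Fin 3 → ℝ) (j : Fin 3) : ℂ :=
  ∑' k : Fin 3 → ℤ, if k = 0 then 0 else
    (∑ l, ((if j = l then 1 else 0) - (k j : ℂ) * (k l : ℂ) / (normSqK k : ℂ)) *
      fourierCoef (fun y => u y l) k) * fchar k x

/-- The cubic Fourier truncation `𝒮_n = 𝒯_{(n,n,n)}`, acting componentwise on
vector fields. -/
def SnV (n : ℕ) (u : V3) (x : Fin 3 → ℝ) (j : Fin 3) : ℂ :=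
  rectSum (fun _ : Fin 3 => n) (fun y => u y j) x
namespace NSAux

lemma fchar_mul {d : ℕ} (k m : Fin d → ℤ) (x : Fin d → ℝ) :
    fchar k x * fchar m x = fchar (k + m) x := by
  rw [fchar, fchar, fchar, ← Complex.exp_add, ← mul_add, ← Finset.sum_add_distrib]
  congr 2
  refine Finset.sum_congr rfl fun i _ => ?_
  simp [Pi.add_apply]
  push_cast
  ring

lemma fchar_zero {d : ℕ} (x : Fin d → ℝ) : fchar (0 : Fin d → ℤ) x = 1 := by
  simp [fchar]

lemma measurableSet_box (d : ℕ) : MeasurableSet (box d) :=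
  MeasurableSet.univ_pi fun _ => measurableSet_Ioc

lemma continuous_fchar {d : ℕ} (k : Fin d → ℤ) : Continuous (fchar k) := by
  refine Complex.continuous_exp.comp (continuous_const.mul ?_)
  exact continuous_finset_sum _ fun i _ =>
    continuous_const.mul (Complex.continuous_ofReal.comp (continuous_apply i))

lemma norm_fchar {d : ℕ} (k : Fin d → ℤ) (x : Fin d → ℝ) : ‖fchar k x‖ = 1 := by
  have : (∑ i, (k i : ℂ) * (x i : ℂ)) = ((∑ i, (k i : ℝ) * x i : ℝ) : ℂ) := by
    push_cast; ring_nf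
  rw [fchar, this]
  rw [Complex.norm_exp]
  have : (2 * (Real.pi : ℂ) * Complex.I * ((∑ i, (k i : ℝ) * x i : ℝ) : ℂ)).re = 0 := by
    simp [Complex.mul_re, Complex.mul_im]
  rw [this, Real.exp_zero]

lemma volume_box (d : ℕ) : volume (box d) = 1 := by
  rw [box, volume_pi_pi]
  simp

lemma integrableOn_fchar {d : ℕ} (k : Fin d → ℤ) : IntegrableOn (fchar k) (box d) := by
  refine Measure.integrableOn_of_bounded (M := 1) ?_ ((continuous_fchar k).aestronglyMeasurable) ?_
  · rw [volume_box]; simp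
  · filter_upwards with x; rw [norm_fchar]

lemma integral_Ioc_exp (m : ℤ) :
    (∫ t in Set.Ioc (0:ℝ) 1, Complex.exp (2 * (Real.pi : ℂ) * Complex.I * m * t)) =
      if m = 0 then 1 else 0 := by
  rcases eq_or_ne m 0 with hm | hm
  · simp [hm]
  · rw [if_neg hm, ← intervalIntegral.integral_of_le (by norm_num : (0:ℝ) ≤ 1)]
    have hc : (2 * (Real.pi : ℂ) * Complex.I * m) ≠ 0 := by
      simp [Real.pi_ne_zero, Complex.I_ne_zero, hm]
    have := integral_exp_mul_complex (a := (0:ℝ)) (b := 1) hc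
    rw [intervalIntegral.integral_congr (g := fun x : ℝ =>
        Complex.exp (2 * (Real.pi : ℂ) * Complex.I * m * x)) (fun x _ => rfl), this]
    have h1 : Complex.exp (2 * (Real.pi : ℂ) * Complex.I * m * (1:ℝ)) = 1 := by
      rw [show (2 * (Real.pi : ℂ) * Complex.I * m * (1:ℝ)) = m * (2 * Real.pi * Complex.I) by
        push_cast; ring]
      exact Complex.exp_int_mul_two_pi_mul_I m
    rw [h1]
    simp

lemma integral_fchar {d : ℕ} (k : Fin d → ℤ) :
    (∫ x in box d, fchar k x) = if k = 0 then 1 else 0 := by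
  have hfact : ∀ x : Fin d → ℝ, (box d).indicator (fchar k) x =
      ∏ i, (Set.Ioc (0:ℝ) 1).indicator
        (fun t => Complex.exp (2 * (Real.pi : ℂ) * Complex.I * k i * t)) (x i) := by
    intro x
    by_cases hx : x ∈ box d
    · rw [Set.indicator_of_mem hx]
      have : ∀ i, x i ∈ Set.Ioc (0:ℝ) 1 := fun i => hx i (Set.mem_univ i)
      rw [fchar, Finset.mul_sum, Complex.exp_sum]
      refine Finset.prod_congr rfl fun i _ => ?_
      rw [Set.indicator_of_mem (this i)]
      ring_nf
    · rw [Set.indicator_of_notMem hx]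
      obtain ⟨i, hi⟩ : ∃ i, x i ∉ Set.Ioc (0:ℝ) 1 := by
        by_contra h; push_neg at h
        exact hx fun i _ => h i
      symm
      refine Finset.prod_eq_zero (Finset.mem_univ i) ?_
      rw [Set.indicator_of_notMem hi]
  rw [← integral_indicator (measurableSet_box d)]
  rw [integral_congr_ae (Filter.Eventually.of_forall hfact)]
  rw [MeasureTheory.integral_fintype_prod_volume_eq_prod (ι := Fin d)
    (f := fun i t => (Set.Ioc (0:ℝ) 1).indicator
      (fun s => Complex.exp (2 * (Real.pi : ℂ) * Complex.I * k i * s)) t)]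
  have h1 : ∀ i : Fin d, (∫ t : ℝ, (Set.Ioc (0:ℝ) 1).indicator
      (fun s => Complex.exp (2 * (Real.pi : ℂ) * Complex.I * k i * s)) t) =
      if k i = 0 then 1 else 0 := by
    intro i
    rw [integral_indicator measurableSet_Ioc]
    exact integral_Ioc_exp (k i)
  simp_rw [h1]
  rcases eq_or_ne k 0 with hk | hk
  · simp [hk]
  · rw [if_neg hk]
    obtain ⟨i, hi⟩ : ∃ i, k i ≠ 0 := by
      by_contra h; push_neg at h; exact hk (funext h)
    exact Finset.prod_eq_zero (Finset.mem_univ i) (by rw [if_neg hi])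


lemma fourierCoef_sum {d : ℕ} {α : Type*} (s : Finset α) (g : α → ℂ)
    (κ : α → Fin d → ℤ) (m : Fin d → ℤ) :
    fourierCoef (fun x => ∑ t ∈ s, g t * fchar (κ t) x) m =
      ∑ t ∈ s, g t * (if κ t = m then 1 else 0) := by
  rw [fourierCoef]
  have hpt : ∀ x : Fin d → ℝ, fchar (-m) x • (∑ t ∈ s, g t * fchar (κ t) x) =
      ∑ t ∈ s, g t * fchar (κ t + -m) x := by
    intro x
    rw [smul_eq_mul, Finset.mul_sum]
    refine Finset.sum_congr rfl fun t _ => ?_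
    rw [← fchar_mul (κ t) (-m) x]; ring
  rw [integral_congr_ae (Filter.Eventually.of_forall fun x => hpt x)]
  rw [integral_finset_sum _ (fun t _ => (integrableOn_fchar (κ t + -m)).const_mul (g t))]
  refine Finset.sum_congr rfl fun t _ => ?_
  rw [integral_const_mul, integral_fchar]
  congr 1
  by_cases h : κ t = m <;> simp [h, add_neg_eq_zero]

/-- The continuous linear map `x ↦ 2πi ∑ k_i x_i`. -/
def ell {d : ℕ} (k : Fin d → ℤ) : (Fin d → ℝ) →L[ℝ] ℂ :=
  ∑ i, ((2 * (Real.pi : ℂ) * Complex.I * (k i : ℂ)) •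
      (Complex.ofRealCLM.comp (ContinuousLinearMap.proj i)))

lemma ell_apply {d : ℕ} (k : Fin d → ℤ) (y : Fin d → ℝ) :
    ell k y = 2 * (Real.pi : ℂ) * Complex.I * ∑ i, (k i : ℂ) * (y i : ℂ) := by
  rw [ell, ContinuousLinearMap.sum_apply, Finset.mul_sum]
  refine Finset.sum_congr rfl fun i _ => ?_
  simp only [ContinuousLinearMap.smul_apply, ContinuousLinearMap.comp_apply,
    ContinuousLinearMap.proj_apply, Complex.ofRealCLM_apply, smul_eq_mul]
  ring

lemma hasFDerivAt_fchar {d : ℕ} (k : Fin d → ℤ) (x : Fin d → ℝ) :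
    HasFDerivAt (fchar k) (fchar k x • ell k) x := by
  have h1 : HasFDerivAt (fun y : Fin d → ℝ =>
      2 * (Real.pi : ℂ) * Complex.I * ∑ i, (k i : ℂ) * (y i : ℂ)) (ell k) x := by
    have := (ell k).hasFDerivAt (x := x)
    apply this.congr_of_eventuallyEq
    filter_upwards with y
    rw [ell_apply]
  have := h1.cexp
  exact this

lemma differentiableAt_fchar {d : ℕ} (k : Fin d → ℤ) (x : Fin d → ℝ) :
    DifferentiableAt ℝ (fchar k) x := (hasFDerivAt_fchar k x).differentiableAt

lemma fderiv_fchar_single {d : ℕ} (k : Fin d → ℤ) (x : Fin d → ℝ) (i : Fin d) :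
    fderiv ℝ (fchar k) x (Pi.single i 1) =
      (2 * (Real.pi : ℂ) * Complex.I * (k i : ℂ)) * fchar k x := by
  rw [(hasFDerivAt_fchar k x).fderiv, ContinuousLinearMap.smul_apply, ell_apply,
    smul_eq_mul]
  have : (∑ j, (k j : ℂ) * ((Pi.single i (1:ℝ) : Fin d → ℝ) j : ℂ)) = (k i : ℂ) := by
    rw [Finset.sum_eq_single i]
    · simp
    · intro j _ hj; simp [Pi.single_apply, hj]
    · intro h; exact absurd (Finset.mem_univ i) h
  rw [this]; ring

lemma fderiv_sum_fchar {d : ℕ} {α : Type*} (s : Finset α) (g : α → ℂ)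
    (κ : α → Fin d → ℤ) (x : Fin d → ℝ) (i : Fin d) :
    fderiv ℝ (fun y => ∑ t ∈ s, g t * fchar (κ t) y) x (Pi.single i 1) =
      ∑ t ∈ s, g t * ((2 * (Real.pi : ℂ) * Complex.I * (κ t i : ℂ)) * fchar (κ t) x) := by
  have hdiff : ∀ t ∈ s, DifferentiableAt ℝ (fun y => g t * fchar (κ t) y) x :=
    fun t _ => (differentiableAt_fchar (κ t) x).const_mul (g t)
  rw [fderiv_fun_sum hdiff, ContinuousLinearMap.sum_apply]
  refine Finset.sum_congr rfl fun t _ => ?_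
  rw [fderiv_const_mul (differentiableAt_fchar (κ t) x) (g t)]
  simp only [ContinuousLinearMap.smul_apply, smul_eq_mul]
  rw [fderiv_fchar_single]


lemma mem_rect {d : ℕ} (n : Fin d → ℕ) (k : Fin d → ℤ) :
    k ∈ rect n ↔ ∀ i, -(n i : ℤ) ≤ k i ∧ k i ≤ (n i : ℤ) := by
  simp [rect, Fintype.mem_piFinset, Finset.mem_Icc]

lemma zero_mem_rect {d : ℕ} (n : Fin d → ℕ) : (0 : Fin d → ℤ) ∈ rect n := by
  rw [mem_rect]; intro i; constructor <;> simp

lemma neg_mem_rect {d : ℕ} {n : Fin d → ℕ} {k : Fin d → ℤ} (h : k ∈ rect n) :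
    -k ∈ rect n := by
  rw [mem_rect] at h ⊢
  intro i; have := h i; simp only [Pi.neg_apply]; omega

lemma add_mem_rect {n : ℕ} {p q : Fin 3 → ℤ} (hp : p ∈ rect (fun _ : Fin 3 => n))
    (hq : q ∈ rect (fun _ : Fin 3 => n)) : p + q ∈ rect (fun _ : Fin 3 => 2 * n) := by
  rw [mem_rect] at hp hq ⊢
  intro i; have h1 := hp i; have h2 := hq i
  simp only [Pi.add_apply] at *
  push_cast at *
  omega

lemma rect_subset_rect {n m : ℕ} (h : n ≤ m) :
    rect (fun _ : Fin 3 => n) ⊆ rect (fun _ : Fin 3 => m) := by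
  intro k hk
  rw [mem_rect] at hk ⊢
  intro i; have := hk i
  have : (n : ℤ) ≤ m := by exact_mod_cast h
  have := hk i
  omega

lemma coef_eq_of_repr {n : ℕ} {f : (Fin 3 → ℝ) → ℂ} (c : (Fin 3 → ℤ) → ℂ)
    (hc : f = fun x => ∑ k ∈ rect (fun _ : Fin 3 => n), c k * fchar k x) (m : Fin 3 → ℤ) :
    fourierCoef f m = if m ∈ rect (fun _ : Fin 3 => n) then c m else 0 := by
  rw [hc]
  rw [show (fun x => ∑ k ∈ rect (fun _ : Fin 3 => n), c k * fchar k x) =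
    (fun x => ∑ k ∈ rect (fun _ : Fin 3 => n), c k * fchar (id k) x) from rfl]
  rw [fourierCoef_sum]
  simp only [id_eq, mul_ite, mul_one, mul_zero]
  exact Finset.sum_ite_eq' _ m c

lemma inSn_zero {n : ℕ} {f : (Fin 3 → ℝ) → ℂ} (h : inSn n f) :
    ∀ k, k ∉ rect (fun _ : Fin 3 => n) → fourierCoef f k = 0 := by
  obtain ⟨c, hc⟩ := h
  intro k hk
  rw [coef_eq_of_repr c hc, if_neg hk]

lemma inSn_repr {n : ℕ} {f : (Fin 3 → ℝ) → ℂ} (h : inSn n f) :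
    f = fun x => ∑ k ∈ rect (fun _ : Fin 3 => n), fourierCoef f k * fchar k x := by
  obtain ⟨c, hc⟩ := h
  have hcoef : ∀ k ∈ rect (fun _ : Fin 3 => n), fourierCoef f k = c k := by
    intro k hk
    rw [coef_eq_of_repr c hc, if_pos hk]
  rw [hc]
  funext x
  refine Finset.sum_congr rfl fun k hk => ?_
  rw [← hc, hcoef k hk]

lemma fourierCoef_zero_fn {d : ℕ} (m : Fin d → ℤ) :
    fourierCoef (fun _ : Fin d → ℝ => (0 : ℂ)) m = 0 := by
  simp [fourierCoef]

/-- Uniqueness: if a trigonometric polynomial vanishes identically, its coefficients vanish. -/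
lemma trig_coef_zero {d : ℕ} (s : Finset (Fin d → ℤ)) (g : (Fin d → ℤ) → ℂ)
    (h : ∀ x, ∑ k ∈ s, g k * fchar k x = 0) : ∀ m ∈ s, g m = 0 := by
  intro m hm
  have h1 : fourierCoef (fun x => ∑ k ∈ s, g k * fchar (id k) x) m = 0 := by
    rw [show (fun x => ∑ k ∈ s, g k * fchar (id k) x) = (fun _ : Fin d → ℝ => (0:ℂ)) from
      funext fun x => h x]
    exact fourierCoef_zero_fn m
  rw [fourierCoef_sum] at h1
  simp only [id_eq, mul_ite, mul_one, mul_zero] at h1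
  rwa [Finset.sum_ite_eq' _ m g, if_pos hm] at h1

lemma fourierCoef_at_zero {d : ℕ} (f : (Fin d → ℝ) → ℂ) :
    fourierCoef f 0 = ∫ x in box d, f x := by
  rw [fourierCoef]
  congr 1
  funext x
  rw [neg_zero, fchar_zero, one_smul]

lemma two_pi_I_ne_zero : (2 * (Real.pi : ℂ) * Complex.I) ≠ 0 := by
  simp [Real.pi_ne_zero, Complex.I_ne_zero, Complex.ofReal_ne_zero]


/-- Key symmetrization cancellation. -/
lemma sym_cancel (A : Finset (Fin 3 → ℤ)) (a : (Fin 3 → ℤ) → ℂ)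
    (bq : Fin 3 → ℂ) (q : Fin 3 → ℤ)
    (ha0 : ∀ p, p ∉ A → a p = 0)
    (hdivb : ∑ i, (q i : ℂ) * bq i = 0) :
    ∑ i, bq i * ∑ p ∈ A, (p i : ℂ) * (a p * a (-(q + p))) = 0 := by
  classical
  set σ : (Fin 3 → ℤ) → (Fin 3 → ℤ) := fun p => -(q + p) with hσ
  have hσσ : ∀ p, σ (σ p) = p := by intro p; simp [hσ]
  set E : Finset (Fin 3 → ℤ) := A ∪ A.image σ with hE
  have hAE : A ⊆ E := Finset.subset_union_left
  have hσE : ∀ p ∈ E, σ p ∈ E := by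
    intro p hp
    rcases Finset.mem_union.mp hp with h | h
    · exact Finset.mem_union_right _ (Finset.mem_image_of_mem σ h)
    · obtain ⟨r, hr, hrp⟩ := Finset.mem_image.mp h
      exact Finset.mem_union_left _ (by rw [← hrp, hσσ]; exact hr)
  set P : (Fin 3 → ℤ) → ℂ := fun p => a p * a (-(q + p)) with hP
  have hPσ : ∀ p, P (σ p) = P p := by
    intro p
    have h1 : -(q + σ p) = p := by simp [hσ]
    rw [hP]
    simp only []
    rw [h1]
    show a (σ p) * a p = a p * a (-(q+p))
    rw [hσ]; ring
  have hext : ∀ i : Fin 3, (∑ p ∈ A, (p i : ℂ) * P p) = ∑ p ∈ E, (p i : ℂ) * P p := by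
    intro i
    refine Finset.sum_subset hAE fun p _ hp => ?_
    rw [hP]; simp [ha0 p hp]
  have hrefl : ∀ i : Fin 3, (∑ p ∈ E, (p i : ℂ) * P p) =
      ∑ p ∈ E, ((σ p) i : ℂ) * P p := by
    intro i
    refine Finset.sum_nbij' σ σ (fun p hp => hσE p hp) (fun p hp => hσE p hp)
      (fun p _ => hσσ p) (fun p _ => hσσ p) (fun p _ => ?_)
    rw [hσσ p, hPσ p]
  have hhalf : ∀ i : Fin 3, (∑ p ∈ E, (p i : ℂ) * P p) =
      -(q i : ℂ) / 2 * ∑ p ∈ E, P p := by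
    intro i
    have h2 : (∑ p ∈ E, (p i : ℂ) * P p) + (∑ p ∈ E, (p i : ℂ) * P p) =
        ∑ p ∈ E, -(q i : ℂ) * P p := by
      nth_rewrite 2 [hrefl i]
      rw [← Finset.sum_add_distrib]
      refine Finset.sum_congr rfl fun p _ => ?_
      have : ((σ p) i : ℂ) = -(q i : ℂ) - (p i : ℂ) := by
        rw [hσ]; push_cast [Pi.neg_apply, Pi.add_apply]; ring
      rw [this]; ring
    rw [← Finset.mul_sum] at h2
    have := h2
    linear_combination (1/2 : ℂ) * this
  calc ∑ i, bq i * ∑ p ∈ A, (p i : ℂ) * (a p * a (-(q + p)))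
      = ∑ i, bq i * (-(q i : ℂ) / 2 * ∑ p ∈ E, P p) := by
        refine Finset.sum_congr rfl fun i _ => ?_
        rw [show (∑ p ∈ A, (p i : ℂ) * (a p * a (-(q + p)))) = ∑ p ∈ A, (p i : ℂ) * P p from rfl,
          hext i, hhalf i]
    _ = (-(∑ p ∈ E, P p) / 2) * ∑ i, (q i : ℂ) * bq i := by
        rw [Finset.mul_sum]
        refine Finset.sum_congr rfl fun i _ => ?_
        ring
    _ = 0 := by rw [hdivb, mul_zero]


lemma algebra_final (A : Finset (Fin 3 → ℤ))
    (hAneg : ∀ k : Fin 3 → ℤ, k ∈ A → -k ∈ A)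
    (a b : Fin 3 → (Fin 3 → ℤ) → ℂ)
    (ha_zero : ∀ j k, k ∉ A → a j k = 0)
    (ha0 : ∀ j, a j 0 = 0)
    (hdiva : ∀ k, ∑ j, (k j : ℂ) * a j k = 0)
    (hdivb : ∀ k, ∑ i, (k i : ℂ) * b i k = 0)
    (wc : Fin 3 → (Fin 3 → ℤ) → ℂ)
    (hwc : ∀ l k, wc l k = ∑ t ∈ Finset.univ ×ˢ (A ×ˢ A),
      (b t.1 t.2.1 * (a l t.2.2 * ((2 * (Real.pi:ℂ) * Complex.I) * (t.2.2 t.1 : ℂ)))) *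
        (if t.2.1 + t.2.2 = k then 1 else 0)) :
    ∑ j, ∑ m ∈ A, a j (-m) * (if m = 0 then 0 else
      ∑ l, ((if j = l then 1 else 0) - (m j : ℂ) * (m l : ℂ) / (normSqK m : ℂ)) * wc l m)
      = 0 := by
  classical
  have step6 : ∀ m ∈ A, (∑ j, a j (-m) * (if m = 0 then 0 else
      ∑ l, ((if j = l then 1 else 0) - (m j : ℂ) * (m l : ℂ) / (normSqK m : ℂ)) * wc l m))
      = ∑ l, a l (-m) * wc l m := by
    intro m _
    by_cases hm : m = 0
    · subst hm
      simp [ha0]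
    · simp only [if_neg hm]
      have hdivm : ∑ j, ((m j : ℂ)) * a j (-m) = 0 := by
        have h1 := hdiva (-m)
        have h2 : (∑ j, ((-m : Fin 3 → ℤ) j : ℂ) * a j (-m)) =
            -∑ j, ((m j : ℂ)) * a j (-m) := by
          rw [← Finset.sum_neg_distrib]
          refine Finset.sum_congr rfl fun j _ => ?_
          push_cast [Pi.neg_apply]
          ring
        rw [h2] at h1
        exact neg_eq_zero.mp h1
      calc ∑ j, a j (-m) * ∑ l, ((if j = l then 1 else 0) -
              (m j : ℂ) * (m l : ℂ) / (normSqK m : ℂ)) * wc l m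
          = ∑ j, ∑ l, a j (-m) * (((if j = l then 1 else 0) -
              (m j : ℂ) * (m l : ℂ) / (normSqK m : ℂ)) * wc l m) := by
            refine Finset.sum_congr rfl fun j _ => ?_
            rw [Finset.mul_sum]
        _ = ∑ l, ∑ j, a j (-m) * (((if j = l then 1 else 0) -
              (m j : ℂ) * (m l : ℂ) / (normSqK m : ℂ)) * wc l m) := Finset.sum_comm
        _ = ∑ l, (∑ j, a j (-m) * ((if j = l then 1 else 0) -
              (m j : ℂ) * (m l : ℂ) / (normSqK m : ℂ))) * wc l m := by
            refine Finset.sum_congr rfl fun l _ => ?_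
            rw [Finset.sum_mul]
            refine Finset.sum_congr rfl fun j _ => ?_
            ring
        _ = ∑ l, a l (-m) * wc l m := by
            refine Finset.sum_congr rfl fun l _ => ?_
            congr 1
            have hsplit : ∀ j : Fin 3, a j (-m) * ((if j = l then 1 else 0) -
                (m j : ℂ) * (m l : ℂ) / (normSqK m : ℂ)) =
                (if j = l then a j (-m) else 0) -
                  ((m j : ℂ) * a j (-m)) * ((m l : ℂ) / (normSqK m : ℂ)) := by
              intro j
              split_ifs <;> ring
            rw [Finset.sum_congr rfl fun j _ => hsplit j, Finset.sum_sub_distrib,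
              Finset.sum_ite_eq' Finset.univ l (fun j => a j (-m)),
              if_pos (Finset.mem_univ l), ← Finset.sum_mul, hdivm, zero_mul, sub_zero]
  rw [Finset.sum_comm, Finset.sum_congr rfl step6]
  -- Step 7 : substitute the coefficients of the convective term
  have step7 : ∑ m ∈ A, ∑ l, a l (-m) * wc l m =
      ∑ l, ∑ t ∈ Finset.univ ×ˢ (A ×ˢ A),
        (b t.1 t.2.1 * (a l t.2.2 * ((2 * (Real.pi:ℂ) * Complex.I) * (t.2.2 t.1 : ℂ)))) *
          a l (-(t.2.1 + t.2.2)) := by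
    rw [Finset.sum_comm]
    refine Finset.sum_congr rfl fun l _ => ?_
    calc ∑ m ∈ A, a l (-m) * wc l m
        = ∑ m ∈ A, ∑ t ∈ Finset.univ ×ˢ (A ×ˢ A),
            (b t.1 t.2.1 * (a l t.2.2 * ((2 * (Real.pi:ℂ) * Complex.I) * (t.2.2 t.1 : ℂ)))) *
              (if t.2.1 + t.2.2 = m then a l (-m) else 0) := by
          refine Finset.sum_congr rfl fun m _ => ?_
          rw [hwc l m, Finset.mul_sum]
          refine Finset.sum_congr rfl fun t _ => ?_
          split_ifs <;> ring
      _ = ∑ t ∈ Finset.univ ×ˢ (A ×ˢ A), ∑ m ∈ A,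
            (b t.1 t.2.1 * (a l t.2.2 * ((2 * (Real.pi:ℂ) * Complex.I) * (t.2.2 t.1 : ℂ)))) *
              (if t.2.1 + t.2.2 = m then a l (-m) else 0) := Finset.sum_comm
      _ = ∑ t ∈ Finset.univ ×ˢ (A ×ˢ A),
            (b t.1 t.2.1 * (a l t.2.2 * ((2 * (Real.pi:ℂ) * Complex.I) * (t.2.2 t.1 : ℂ)))) *
              a l (-(t.2.1 + t.2.2)) := by
          refine Finset.sum_congr rfl fun t _ => ?_
          rw [← Finset.mul_sum]
          congr 1
          have : ∀ m ∈ A, (if t.2.1 + t.2.2 = m then a l (-m) else 0) =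
              if m = t.2.1 + t.2.2 then a l (-m) else 0 := by
            intro m _
            split_ifs with h1 h2 h2 <;> first | rfl | (exact absurd h1.symm h2) |
              (exact absurd h2.symm h1)
          rw [Finset.sum_congr rfl this, Finset.sum_ite_eq' A (t.2.1 + t.2.2)
            (fun m => a l (-m))]
          by_cases hk : t.2.1 + t.2.2 ∈ A
          · rw [if_pos hk]
          · rw [if_neg hk]
            refine (ha_zero l _ ?_).symm
            intro hcon
            exact hk (by simpa using hAneg _ hcon)
  rw [step7]
  -- Step 8/9 : unflatten and symmetrize
  refine Finset.sum_eq_zero fun l _ => ?_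
  rw [Finset.sum_product]
  have step9 : ∀ i : Fin 3, ∑ qp ∈ A ×ˢ A,
      (b i qp.1 * (a l qp.2 * ((2 * (Real.pi:ℂ) * Complex.I) * (qp.2 i : ℂ)))) *
        a l (-(qp.1 + qp.2)) =
      ∑ q ∈ A, (2 * (Real.pi:ℂ) * Complex.I) *
        (b i q * ∑ p ∈ A, (p i : ℂ) * (a l p * a l (-(q + p)))) := by
    intro i
    rw [Finset.sum_product]
    refine Finset.sum_congr rfl fun q _ => ?_
    rw [Finset.mul_sum, Finset.mul_sum]
    refine Finset.sum_congr rfl fun p _ => ?_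
    ring
  rw [Finset.sum_congr rfl fun i _ => step9 i, Finset.sum_comm]
  refine Finset.sum_eq_zero fun q _ => ?_
  have := sym_cancel A (a l) (fun i => b i q) q (fun p hp => ha_zero l p hp) (hdivb q)
  calc ∑ i, (2 * (Real.pi:ℂ) * Complex.I) *
        (b i q * ∑ p ∈ A, (p i : ℂ) * (a l p * a l (-(q + p))))
      = (2 * (Real.pi:ℂ) * Complex.I) *
        ∑ i, b i q * ∑ p ∈ A, (p i : ℂ) * (a l p * a l (-(q + p))) := by
        rw [Finset.mul_sum]
    _ = 0 := by rw [this, mul_zero]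


/-- generic: Fourier coefficients of a trigonometric polynomial indexed by its frequencies. -/
lemma coef_of_repr {d : ℕ} (s : Finset (Fin d → ℤ)) (g : (Fin d → ℤ) → ℂ) (m : Fin d → ℤ) :
    fourierCoef (fun x => ∑ k ∈ s, g k * fchar k x) m = if m ∈ s then g m else 0 := by
  rw [show (fun x => ∑ k ∈ s, g k * fchar k x) =
    (fun x => ∑ k ∈ s, g k * fchar (id k) x) from rfl, fourierCoef_sum]
  simp only [id_eq, mul_ite, mul_one, mul_zero]
  exact Finset.sum_ite_eq' _ m g

/-- divergence-free trigonometric polynomials have divergence-free coefficients -/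
lemma divFree_coef {n : ℕ} {u : V3} (hu : ∀ j : Fin 3, inSn n (fun x => u x j))
    (hdivu : divFree u) :
    ∀ k, ∑ j, (k j : ℂ) * fourierCoef (fun x => u x j) k = 0 := by
  classical
  set A := rect (fun _ : Fin 3 => n) with hA
  set a : Fin 3 → (Fin 3 → ℤ) → ℂ := fun j k => fourierCoef (fun x => u x j) k with ha
  intro k
  by_cases hk : k ∈ A
  · have hfun : ∀ x, ∑ p ∈ A, (∑ j, a j p * (2 * (Real.pi : ℂ) * Complex.I * (p j : ℂ)))
        * fchar p x = 0 := by
      intro x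
      have hdd := hdivu x
      have hder : ∀ j : Fin 3, fderiv ℝ (fun y => u y j) x (Pi.single j 1) =
          ∑ p ∈ A, a j p * ((2 * (Real.pi : ℂ) * Complex.I * (p j : ℂ)) * fchar p x) := by
        intro j
        rw [inSn_repr (hu j)]
        exact fderiv_sum_fchar A (a j) (fun p => p) x j
      calc ∑ p ∈ A, (∑ j, a j p * (2 * (Real.pi : ℂ) * Complex.I * (p j : ℂ))) * fchar p x
          = ∑ p ∈ A, ∑ j, a j p * ((2 * (Real.pi : ℂ) * Complex.I * (p j : ℂ)) * fchar p x) := by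
            refine Finset.sum_congr rfl fun p _ => ?_
            rw [Finset.sum_mul]
            exact Finset.sum_congr rfl fun j _ => by ring
        _ = ∑ j, ∑ p ∈ A, a j p * ((2 * (Real.pi : ℂ) * Complex.I * (p j : ℂ)) * fchar p x) :=
            Finset.sum_comm
        _ = ∑ j : Fin 3, fderiv ℝ (fun y => u y j) x (Pi.single j 1) := by
            exact Finset.sum_congr rfl fun j _ => (hder j).symm
        _ = 0 := hdd
    have hz := trig_coef_zero A _ hfun k hk
    have hfact : (2 * (Real.pi : ℂ) * Complex.I) * (∑ j, (k j : ℂ) * a j k) =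
        ∑ j, a j k * (2 * (Real.pi : ℂ) * Complex.I * (k j : ℂ)) := by
      rw [Finset.mul_sum]
      exact Finset.sum_congr rfl fun j _ => by ring
    have : (2 * (Real.pi : ℂ) * Complex.I) * (∑ j, (k j : ℂ) * a j k) = 0 := by
      rw [hfact, hz]
    exact (mul_eq_zero.mp this).resolve_left two_pi_I_ne_zero
  · have hz : ∀ j : Fin 3, a j k = 0 := fun j => inSn_zero (hu j) k hk
    exact Finset.sum_eq_zero fun j _ => mul_eq_zero_of_right _ (hz j)


end NSAux

/-- Cancellation of the truncated convective term: for `u, v ∈ (𝒮_n L²(𝕋³))³` with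
`∇·u = ∇·v = 0` and zero means, `∫_{𝕋³} u · 𝒮_n 𝒫((v·∇)u) dx = 0`. -/
theorem statement9 (n : ℕ) (u v : V3)
    (hu : ∀ j : Fin 3, inSn n (fun x => u x j))
    (hv : ∀ j : Fin 3, inSn n (fun x => v x j))
    (hdivu : divFree u) (hdivv : divFree v)
    (hmu : meanZeroV u) (hmv : meanZeroV v) :
    (∫ x in box 3, ∑ j, u x j * SnV n (leray (convect v u)) x j) = 0 := by
  classical
  set A : Finset (Fin 3 → ℤ) := rect (fun _ : Fin 3 => n) with hA
  set A2 : Finset (Fin 3 → ℤ) := rect (fun _ : Fin 3 => 2 * n) with hA2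
  have hA_sub : A ⊆ A2 := NSAux.rect_subset_rect (by omega)
  set a : Fin 3 → (Fin 3 → ℤ) → ℂ := fun j k => fourierCoef (fun x => u x j) k with ha
  set b : Fin 3 → (Fin 3 → ℤ) → ℂ := fun i k => fourierCoef (fun x => v x i) k with hb
  have ha_zero : ∀ j k, k ∉ A → a j k = 0 := fun j k hk => NSAux.inSn_zero (hu j) k hk
  have ha_repr : ∀ j, (fun x => u x j) = fun x => ∑ k ∈ A, a j k * fchar k x :=
    fun j => NSAux.inSn_repr (hu j)
  have hb_repr : ∀ i, (fun x => v x i) = fun x => ∑ k ∈ A, b i k * fchar k x :=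
    fun i => NSAux.inSn_repr (hv i)
  have hdiva : ∀ k, ∑ j, (k j : ℂ) * a j k = 0 := NSAux.divFree_coef hu hdivu
  have hdivb : ∀ k, ∑ i, (k i : ℂ) * b i k = 0 := NSAux.divFree_coef hv hdivv
  have ha0 : ∀ j, a j 0 = 0 := by
    intro j
    show fourierCoef (fun x => u x j) 0 = 0
    rw [NSAux.fourierCoef_at_zero]
    exact hmu j
  -- coefficients of the convective term
  set T : Finset (Fin 3 × ((Fin 3 → ℤ) × (Fin 3 → ℤ))) := Finset.univ ×ˢ (A ×ˢ A) with hT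
  have hWrepr : ∀ l, (fun x => convect v u x l) = fun x => ∑ t ∈ T,
      (b t.1 t.2.1 * (a l t.2.2 * ((2 * (Real.pi:ℂ) * Complex.I) * (t.2.2 t.1 : ℂ)))) *
        fchar (t.2.1 + t.2.2) x := by
    intro l
    funext x
    show convect v u x l = _
    rw [convect]
    have hder : ∀ i : Fin 3, fderiv ℝ (fun y => u y l) x (Pi.single i 1) =
        ∑ p ∈ A, a l p * ((2 * (Real.pi : ℂ) * Complex.I * (p i : ℂ)) * fchar p x) := by
      intro i
      rw [ha_repr l]
      exact NSAux.fderiv_sum_fchar A (a l) (fun p => p) x i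
    calc ∑ i, v x i * fderiv ℝ (fun y => u y l) x (Pi.single i 1)
        = ∑ i, (∑ q ∈ A, b i q * fchar q x) *
            (∑ p ∈ A, a l p * ((2 * (Real.pi : ℂ) * Complex.I * (p i : ℂ)) * fchar p x)) := by
          refine Finset.sum_congr rfl fun i _ => ?_
          rw [hder i]
          congr 1
          exact congrFun (hb_repr i) x
      _ = ∑ i, ∑ q ∈ A, ∑ p ∈ A,
            (b i q * (a l p * ((2 * (Real.pi:ℂ) * Complex.I) * (p i : ℂ)))) *
              fchar (q + p) x := by
          refine Finset.sum_congr rfl fun i _ => ?_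
          rw [Finset.sum_mul_sum]
          refine Finset.sum_congr rfl fun q _ => Finset.sum_congr rfl fun p _ => ?_
          rw [← NSAux.fchar_mul q p x]
          ring
      _ = _ := by
          rw [hT, Finset.sum_product]
          refine Finset.sum_congr rfl fun i _ => ?_
          rw [Finset.sum_product]
  set wc : Fin 3 → (Fin 3 → ℤ) → ℂ :=
    fun l k => fourierCoef (fun x => convect v u x l) k with hwcdef
  have hwc : ∀ l k, wc l k = ∑ t ∈ T,
      (b t.1 t.2.1 * (a l t.2.2 * ((2 * (Real.pi:ℂ) * Complex.I) * (t.2.2 t.1 : ℂ)))) *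
        (if t.2.1 + t.2.2 = k then 1 else 0) := by
    intro l k
    show fourierCoef (fun x => convect v u x l) k = _
    rw [hWrepr l]
    exact NSAux.fourierCoef_sum T _ (fun t => t.2.1 + t.2.2) k
  have hwc_zero : ∀ l k, k ∉ A2 → wc l k = 0 := by
    intro l k hk
    rw [hwc l k]
    refine Finset.sum_eq_zero fun t ht => ?_
    have hqp := (Finset.mem_product.mp ht).2
    have hq := (Finset.mem_product.mp hqp).1
    have hp := (Finset.mem_product.mp hqp).2
    have hmem : t.2.1 + t.2.2 ∈ A2 := NSAux.add_mem_rect hq hp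
    rw [if_neg (fun hcon => hk (by rwa [hcon] at hmem)), mul_zero]
  -- the Leray projection of the convective term is a trigonometric polynomial
  set G : Fin 3 → (Fin 3 → ℤ) → ℂ := fun j k => if k = 0 then 0 else
    ∑ l, ((if j = l then 1 else 0) - (k j : ℂ) * (k l : ℂ) / (normSqK k : ℂ)) * wc l k
    with hG
  have hL : ∀ j, (fun x => leray (convect v u) x j) =
      fun x => ∑ k ∈ A2, G j k * fchar k x := by
    intro j
    funext x
    show leray (convect v u) x j = _
    rw [leray]
    rw [tsum_eq_sum (s := A2) (fun k hk => by
      rw [if_neg (fun hcon => hk (by rw [hcon]; exact NSAux.zero_mem_rect _))]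
      have hz : ∀ l : Fin 3, fourierCoef (fun y => convect v u y l) k = 0 :=
        fun l => hwc_zero l k hk
      simp [hz])]
    refine Finset.sum_congr rfl fun k _ => ?_
    by_cases hk0 : k = 0
    · rw [if_pos hk0, hG]
      simp only [if_pos hk0]
      rw [zero_mul]
    · rw [if_neg hk0, hG]
      simp only [if_neg hk0]
      rfl
  -- the cubic truncation
  have hS : ∀ j x, SnV n (leray (convect v u)) x j = ∑ m ∈ A, G j m * fchar m x := by
    intro j x
    rw [SnV, rectSum]
    refine Finset.sum_congr rfl fun m hm => ?_
    rw [show (fun y => leray (convect v u) y j) = fun x => ∑ k ∈ A2, G j k * fchar k x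
        from hL j]
    rw [NSAux.coef_of_repr A2 (G j) m, if_pos (hA_sub hm), smul_eq_mul]
    ring
  -- compute the integral
  have hintegrand : ∀ x, (∑ j, u x j * SnV n (leray (convect v u)) x j) =
      ∑ t ∈ T, (a t.1 t.2.1 * G t.1 t.2.2) * fchar (t.2.1 + t.2.2) x := by
    intro x
    calc ∑ j, u x j * SnV n (leray (convect v u)) x j
        = ∑ j, (∑ k ∈ A, a j k * fchar k x) * (∑ m ∈ A, G j m * fchar m x) := by
          refine Finset.sum_congr rfl fun j _ => ?_
          rw [hS j x]
          congr 1
          exact congrFun (ha_repr j) x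
      _ = ∑ j, ∑ k ∈ A, ∑ m ∈ A, (a j k * G j m) * fchar (k + m) x := by
          refine Finset.sum_congr rfl fun j _ => ?_
          rw [Finset.sum_mul_sum]
          refine Finset.sum_congr rfl fun k _ => Finset.sum_congr rfl fun m _ => ?_
          rw [← NSAux.fchar_mul k m x]
          ring
      _ = _ := by
          rw [hT, Finset.sum_product]
          refine Finset.sum_congr rfl fun j _ => ?_
          rw [Finset.sum_product]
  calc (∫ x in box 3, ∑ j, u x j * SnV n (leray (convect v u)) x j)
      = ∫ x in box 3, ∑ t ∈ T, (a t.1 t.2.1 * G t.1 t.2.2) * fchar (t.2.1 + t.2.2) x := by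
        exact integral_congr_ae (Filter.Eventually.of_forall fun x => hintegrand x)
    _ = fourierCoef (fun x => ∑ t ∈ T, (a t.1 t.2.1 * G t.1 t.2.2) *
          fchar (t.2.1 + t.2.2) x) 0 := (NSAux.fourierCoef_at_zero _).symm
    _ = ∑ t ∈ T, (a t.1 t.2.1 * G t.1 t.2.2) * (if t.2.1 + t.2.2 = 0 then 1 else 0) :=
        NSAux.fourierCoef_sum T _ (fun t => t.2.1 + t.2.2) 0
    _ = ∑ j, ∑ k ∈ A, ∑ m ∈ A, (a j k * G j m) * (if k + m = 0 then 1 else 0) := by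
        rw [hT, Finset.sum_product]
        refine Finset.sum_congr rfl fun j _ => ?_
        rw [Finset.sum_product]
    _ = ∑ j, ∑ m ∈ A, a j (-m) * G j m := by
        refine Finset.sum_congr rfl fun j _ => ?_
        rw [Finset.sum_comm]
        refine Finset.sum_congr rfl fun m hm => ?_
        have hrw : ∀ k ∈ A, (a j k * G j m) * (if k + m = 0 then 1 else 0) =
            if k = -m then a j k * G j m else 0 := by
          intro k _
          have : (k + m = 0) ↔ (k = -m) := add_eq_zero_iff_eq_neg
          rw [if_congr this rfl rfl]
          split_ifs <;> ring
        rw [Finset.sum_congr rfl hrw, Finset.sum_ite_eq' A (-m) (fun k => a j k * G j m),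
          if_pos (NSAux.neg_mem_rect hm)]
    _ = 0 := by
        refine NSAux.algebra_final A (fun k hk => NSAux.neg_mem_rect hk) a b ha_zero ha0 hdiva hdivb
          wc ?_
        intro l k
        rw [hwc l k, hT]


end
end
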